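/- Let θ₁ : U → V and θ₂ : V → W be strong (∧,r)-premorphisms between restriction semigroups. Then the composition θ₁θ₂ : U → W is a strong (∧,r)-premorphism. -/
import Mathlib


universe u v w

/-- Identities of a partial binary operation given by definedness relation `D`
and value function `mul`: idempotents acting as left/right identity whenever
the relevant products are defined. -/
def IsIdOf {C : Type u} (D : C → C → Prop) (mul : C → C → C) (e : C) : Prop :=
  D e e ∧ mul e e = e ∧ (∀ x, D e x → mul e x = x) ∧ (∀ x, D x e → mul x e = x)

/-- A small category, presented as a set with a partial binary operation:
`D x y` means the product `x·y` is defined, and `mul x y` is its value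
(meaningful only when `D x y` holds). -/
structure SmallCat (C : Type u) where
  D : C → C → Prop
  mul : C → C → C
  d : C → C
  r : C → C
  /-- (Ca1): ∃ x·(y·z) ↔ ∃ (x·y)·z -/
  ca1 : ∀ x y z : C, (D y z ∧ D x (mul y z)) ↔ (D x y ∧ D (mul x y) z)
  /-- (Ca1): associativity when defined -/
  ca1_eq : ∀ x y z : C, D x y → D y z → mul x (mul y z) = mul (mul x y) z
  /-- (Ca2): ∃ x·(y·z) ↔ ∃ x·y and ∃ y·z -/
  ca2 : ∀ x y z : C, (D y z ∧ D x (mul y z)) ↔ (D x y ∧ D y z)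
  /-- (Ca3): existence and uniqueness of domain and range identities -/
  d_id : ∀ x, IsIdOf D mul (d x)
  r_id : ∀ x, IsIdOf D mul (r x)
  d_def : ∀ x, D (d x) x
  r_def : ∀ x, D x (r x)
  d_unique : ∀ x e, IsIdOf D mul e → D e x → e = d x
  r_unique : ∀ x e, IsIdOf D mul e → D x e → e = r x
  /-- x·y is defined iff r(x) = d(y) -/
  defined_iff : ∀ x y, D x y ↔ r x = d y

/-- An ordered category: a small category with a partial order satisfying
(Or1)–(Or3), with corestriction `cores a f = a|f` and restriction
`restr f a = f|a`. -/
structure OrdCat (C : Type u) extends SmallCat C where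
  le : C → C → Prop
  le_refl : ∀ a, le a a
  le_trans : ∀ a b c, le a b → le b c → le a c
  le_antisymm : ∀ a b, le a b → le b a → a = b
  or1 : ∀ a b a' b', le a a' → le b b' → D a b → D a' b' → le (mul a b) (mul a' b')
  or2d : ∀ a b, le a b → le (d a) (d b)
  or2r : ∀ a b, le a b → le (r a) (r b)
  cores : C → C → C
  restr : C → C → C
  cores_le : ∀ a f, IsIdOf D mul f → le f (r a) → le (cores a f) a
  cores_r : ∀ a f, IsIdOf D mul f → le f (r a) → r (cores a f) = f
  cores_unique : ∀ a f, IsIdOf D mul f → le f (r a) →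
    ∀ b, le b a → r b = f → b = cores a f
  restr_le : ∀ f a, IsIdOf D mul f → le f (d a) → le (restr f a) a
  restr_d : ∀ f a, IsIdOf D mul f → le f (d a) → d (restr f a) = f
  restr_unique : ∀ f a, IsIdOf D mul f → le f (d a) →
    ∀ b, le b a → d b = f → b = restr f a

/-- An inductive category: an ordered category in which any two identities
have a greatest lower bound among the identities. -/
structure IndCat (C : Type u) extends OrdCat C where
  meet : C → C → C
  meet_id : ∀ e f, IsIdOf D mul e → IsIdOf D mul f → IsIdOf D mul (meet e f)
  meet_le_left : ∀ e f, IsIdOf D mul e → IsIdOf D mul f → le (meet e f) e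
  meet_le_right : ∀ e f, IsIdOf D mul e → IsIdOf D mul f → le (meet e f) f
  meet_glb : ∀ e f g, IsIdOf D mul e → IsIdOf D mul f → IsIdOf D mul g →
    le g e → le g f → le g (meet e f)

/-- The pseudoproduct a⊗b = (a|(r(a)∧d(b))) · ((r(a)∧d(b))|b) of an
inductive category. -/
def IndCat.pp {C : Type u} (K : IndCat C) (a b : C) : C :=
  K.mul (K.cores a (K.meet (K.r a) (K.d b))) (K.restr (K.meet (K.r a) (K.d b)) b)

/-- An inductive groupoid: an inductive category with inverses. -/
structure IndGrpd (C : Type u) extends IndCat C where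
  inv : C → C
  inv_def_right : ∀ x, D x (inv x)
  inv_def_left : ∀ x, D (inv x) x
  mul_inv : ∀ x, mul x (inv x) = d x
  inv_mul : ∀ x, mul (inv x) x = r x

/-- A (two-sided) restriction semigroup with respect to a subsemilattice `E`
of idempotents, with unary operations `plus` (a⁺) and `star` (a⁎). -/
structure RSgrp (S : Type u) where
  mul : S → S → S
  assoc : ∀ a b c : S, mul (mul a b) c = mul a (mul b c)
  E : Set S
  E_idem : ∀ e ∈ E, mul e e = e
  E_comm : ∀ e ∈ E, ∀ f ∈ E, mul e f = mul f e
  E_mul_mem : ∀ e ∈ E, ∀ f ∈ E, mul e f ∈ E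
  plus : S → S
  star : S → S
  plus_mem : ∀ a, plus a ∈ E
  star_mem : ∀ a, star a ∈ E
  /-- a R̃_E a⁺ : for all e ∈ E, ea = a ↔ ea⁺ = a⁺ -/
  plus_spec : ∀ a : S, ∀ e ∈ E, (mul e a = a ↔ mul e (plus a) = plus a)
  /-- a L̃_E a⁎ : for all e ∈ E, ae = a ↔ a⁎e = a⁎ -/
  star_spec : ∀ a : S, ∀ e ∈ E, (mul a e = a ↔ mul (star a) e = star a)
  /-- R̃_E is a left congruence -/
  rtilde_left_cong : ∀ a b c : S,
    (∀ e ∈ E, mul e a = a ↔ mul e b = b) →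
    ∀ e ∈ E, (mul e (mul c a) = mul c a ↔ mul e (mul c b) = mul c b)
  /-- L̃_E is a right congruence -/
  ltilde_right_cong : ∀ a b c : S,
    (∀ e ∈ E, mul a e = a ↔ mul b e = b) →
    ∀ e ∈ E, (mul (mul a c) e = mul a c ↔ mul (mul b c) e = mul b c)
  /-- ae = (ae)⁺a -/
  ae_eq : ∀ a : S, ∀ e ∈ E, mul a e = mul (plus (mul a e)) a
  /-- ea = a(ea)⁎ -/
  ea_eq : ∀ a : S, ∀ e ∈ E, mul e a = mul a (star (mul e a))

/-- The natural partial order of a restriction semigroup: a ≤ b iff a = a⁺b. -/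
def RSgrp.NatLe {S : Type u} (R : RSgrp S) (a b : S) : Prop :=
  a = R.mul (R.plus a) b

/-- `K` is the inductive category induced by the restriction semigroup `R`
via the restricted product and the natural partial order. -/
def InducedIndCat {S : Type u} (R : RSgrp S) (K : IndCat S) : Prop :=
  (∀ a b, K.le a b ↔ R.NatLe a b) ∧
  (∀ a b, K.D a b ↔ R.star a = R.plus b) ∧
  (∀ a b, K.D a b → K.mul a b = R.mul a b) ∧
  (∀ x, K.d x = R.plus x) ∧
  (∀ x, K.r x = R.star x) ∧
  (∀ e, IsIdOf K.D K.mul e ↔ e ∈ R.E) ∧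
  (∀ f a, f ∈ R.E → K.le f (K.d a) → K.restr f a = R.mul f a) ∧
  (∀ a f, f ∈ R.E → K.le f (K.r a) → K.cores a f = R.mul a f) ∧
  (∀ e f, e ∈ R.E → f ∈ R.E → K.meet e f = R.mul e f)

/-- `R` is the restriction semigroup induced by the inductive category `K`
via the pseudoproduct, with E = identities, a⁺ = d(a), a⁎ = r(a). -/
def InducedRSgrp {C : Type u} (K : IndCat C) (R : RSgrp C) : Prop :=
  R.mul = K.pp ∧ R.E = {e | IsIdOf K.D K.mul e} ∧
  (∀ a, R.plus a = K.d a) ∧ (∀ a, R.star a = K.r a)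

/-- An inverse semigroup: every element has a unique inverse. -/
structure InvSgrp (S : Type u) where
  mul : S → S → S
  assoc : ∀ a b c : S, mul (mul a b) c = mul a (mul b c)
  inv : S → S
  inv_spec₁ : ∀ a, mul (mul a (inv a)) a = a
  inv_spec₂ : ∀ a, mul (mul (inv a) a) (inv a) = inv a
  inv_unique : ∀ a b, mul (mul a b) a = a → mul (mul b a) b = b → b = inv a

/-- The natural partial order of an inverse semigroup: a ≤ b iff a = eb for
some idempotent e. -/
def InvSgrp.le {S : Type u} (Si : InvSgrp S) (a b : S) : Prop :=
  ∃ e, Si.mul e e = e ∧ a = Si.mul e b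

/-- a⁺ = aa⁻¹ in an inverse semigroup. -/
def InvSgrp.plus {S : Type u} (Si : InvSgrp S) (a : S) : S := Si.mul a (Si.inv a)

/-- a⁎ = a⁻¹a in an inverse semigroup. -/
def InvSgrp.star {S : Type u} (Si : InvSgrp S) (a : S) : S := Si.mul (Si.inv a) a

/-- A (∨,r)-premorphism between restriction semigroups:
(∨1) (st)θ ≤ (sθ)(tθ); (∨2) s⁺θ ≤ (sθ)⁺ and s⁎θ ≤ (sθ)⁎. -/
def IsVPre {S : Type u} {T : Type v} (R : RSgrp S) (R' : RSgrp T) (θ : S → T) : Prop :=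
  (∀ s t, R'.NatLe (θ (R.mul s t)) (R'.mul (θ s) (θ t))) ∧
  (∀ s, R'.NatLe (θ (R.plus s)) (R'.plus (θ s))) ∧
  (∀ s, R'.NatLe (θ (R.star s)) (R'.star (θ s)))

/-- A (∧,r)-premorphism between restriction semigroups:
(∧1) (sθ)(tθ) ≤ (st)θ; (∧2) (sθ)⁺ ≤ s⁺θ and (sθ)⁎ ≤ s⁎θ. -/
def IsWPre {S : Type u} {T : Type v} (R : RSgrp S) (R' : RSgrp T) (θ : S → T) : Prop :=
  (∀ s t, R'.NatLe (R'.mul (θ s) (θ t)) (θ (R.mul s t))) ∧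
  (∀ s, R'.NatLe (R'.plus (θ s)) (θ (R.plus s))) ∧
  (∀ s, R'.NatLe (R'.star (θ s)) (θ (R.star s)))

/-- An ordered (∧,r)-premorphism: a (∧,r)-premorphism which is also
order-preserving for the natural partial orders. -/
def IsOrderedWPre {S : Type u} {T : Type v} (R : RSgrp S) (R' : RSgrp T) (θ : S → T) : Prop :=
  IsWPre R R' θ ∧ ∀ s t, R.NatLe s t → R'.NatLe (θ s) (θ t)

/-- A strong (∧,r)-premorphism: a (∧,r)-premorphism satisfying
(∧1)′ (sθ)(tθ) = (sθ)⁺·((st)θ) = ((st)θ)·(tθ)⁎. -/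
def IsStrongWPre {S : Type u} {T : Type v} (R : RSgrp S) (R' : RSgrp T) (θ : S → T) : Prop :=
  IsWPre R R' θ ∧
  (∀ s t, R'.mul (θ s) (θ t) = R'.mul (R'.plus (θ s)) (θ (R.mul s t))) ∧
  (∀ s t, R'.mul (θ s) (θ t) = R'.mul (θ (R.mul s t)) (R'.star (θ t)))

/-- An ordered functor between ordered categories. -/
def IsOrderedFunctor {C : Type u} {D : Type v} (K : OrdCat C) (L : OrdCat D)
    (φ : C → D) : Prop :=
  (∀ x y, K.D x y → L.D (φ x) (φ y)) ∧
  (∀ x y, K.D x y → φ (K.mul x y) = L.mul (φ x) (φ y)) ∧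
  (∀ x y, K.le x y → L.le (φ x) (φ y))

/-- (ICP1): if s·t is defined then (sψ)⊗(tψ) ≤ (s·t)ψ. -/
def ICP1 {C : Type u} {D : Type v} (K : IndCat C) (L : IndCat D) (ψ : C → D) : Prop :=
  ∀ s t, K.D s t → L.le (L.pp (ψ s) (ψ t)) (ψ (K.mul s t))

/-- (ICP2): d(sψ) ≤ d(s)ψ and r(sψ) ≤ r(s)ψ. -/
def ICP2 {C : Type u} {D : Type v} (K : IndCat C) (L : IndCat D) (ψ : C → D) : Prop :=
  (∀ s, L.le (L.d (ψ s)) (ψ (K.d s))) ∧ (∀ s, L.le (L.r (ψ s)) (ψ (K.r s)))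

/-- (ICP3): ψ is order-preserving. -/
def ICP3 {C : Type u} {D : Type v} (K : IndCat C) (L : IndCat D) (ψ : C → D) : Prop :=
  ∀ s t, K.le s t → L.le (ψ s) (ψ t)

/-- (ICP4): (aψ)⊗(fψ) ≤ (a⊗f)ψ and (eψ)⊗(aψ) ≤ (e⊗a)ψ for identities e, f. -/
def ICP4 {C : Type u} {D : Type v} (K : IndCat C) (L : IndCat D) (ψ : C → D) : Prop :=
  (∀ a f, IsIdOf K.D K.mul f → L.le (L.pp (ψ a) (ψ f)) (ψ (K.pp a f))) ∧
  (∀ e a, IsIdOf K.D K.mul e → L.le (L.pp (ψ e) (ψ a)) (ψ (K.pp e a)))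

/-- An inductive category prefunctor: (ICP1)–(ICP4). -/
def IsICP {C : Type u} {D : Type v} (K : IndCat C) (L : IndCat D) (ψ : C → D) : Prop :=
  ICP1 K L ψ ∧ ICP2 K L ψ ∧ ICP3 K L ψ ∧ ICP4 K L ψ

/-- (ICP5): d((sψ)⊗(tψ)) = d(sψ)∧d((s⊗t)ψ) and
r((sψ)⊗(tψ)) = r((s⊗t)ψ)∧r(tψ). -/
def ICP5 {C : Type u} {D : Type v} (K : IndCat C) (L : IndCat D) (ψ : C → D) : Prop :=
  (∀ s t, L.d (L.pp (ψ s) (ψ t)) = L.meet (L.d (ψ s)) (L.d (ψ (K.pp s t)))) ∧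
  (∀ s t, L.r (L.pp (ψ s) (ψ t)) = L.meet (L.r (ψ (K.pp s t))) (L.r (ψ t)))

/-- A strong inductive category prefunctor: (ICP1)–(ICP4) together with (ICP5). -/
def IsStrongICP {C : Type u} {D : Type v} (K : IndCat C) (L : IndCat D) (ψ : C → D) : Prop :=
  IsICP K L ψ ∧ ICP5 K L ψ

/-- An ordered groupoid premorphism between inductive groupoids:
(ICP1), (IGP) (gψ)⁻¹ = g⁻¹ψ, and (ICP3). -/
def IsOGP {C : Type u} {D : Type v} (K : IndGrpd C) (L : IndGrpd D) (ψ : C → D) : Prop :=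
  ICP1 K.toIndCat L.toIndCat ψ ∧
  (∀ g, L.inv (ψ g) = ψ (K.inv g)) ∧
  ICP3 K.toIndCat L.toIndCat ψ

namespace RSgrp

variable {S : Type u} {T : Type v}

lemma plus_idem (R : RSgrp S) {e : S} (he : e ∈ R.E) : R.plus e = e := by
  have h1 : R.mul e (R.plus e) = R.plus e :=
    (R.plus_spec e e he).mp (R.E_idem e he)
  have h2 : R.mul (R.plus e) e = e :=
    (R.plus_spec e (R.plus e) (R.plus_mem e)).mpr (R.E_idem _ (R.plus_mem e))
  calc R.plus e = R.mul e (R.plus e) := h1.symm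
    _ = R.mul (R.plus e) e := R.E_comm e he _ (R.plus_mem e)
    _ = e := h2

lemma star_idem (R : RSgrp S) {e : S} (he : e ∈ R.E) : R.star e = e := by
  have h1 : R.mul (R.star e) e = R.star e :=
    (R.star_spec e e he).mp (R.E_idem e he)
  have h2 : R.mul e (R.star e) = e :=
    (R.star_spec e (R.star e) (R.star_mem e)).mpr (R.E_idem _ (R.star_mem e))
  calc R.star e = R.mul (R.star e) e := h1.symm
    _ = R.mul e (R.star e) := R.E_comm _ (R.star_mem e) e he
    _ = e := h2

lemma plus_mul_self (R : RSgrp S) (a : S) : R.mul (R.plus a) a = a :=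
  (R.plus_spec a (R.plus a) (R.plus_mem a)).mpr (R.E_idem _ (R.plus_mem a))

lemma mul_star_self (R : RSgrp S) (a : S) : R.mul a (R.star a) = a :=
  (R.star_spec a (R.star a) (R.star_mem a)).mpr (R.E_idem _ (R.star_mem a))

/-- (ea)⁺ = e·a⁺ for e ∈ E. -/
lemma plus_mul (R : RSgrp S) {e : S} (he : e ∈ R.E) (a : S) :
    R.plus (R.mul e a) = R.mul e (R.plus a) := by
  have H : ∀ f ∈ R.E, (R.mul f (R.plus (R.mul e a)) = R.plus (R.mul e a) ↔
      R.mul f (R.mul e (R.plus a)) = R.mul e (R.plus a)) := by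
    intro f hf
    have h1 := R.rtilde_left_cong a (R.plus a) e (R.plus_spec a) f hf
    have h2 := R.plus_spec (R.mul e a) f hf
    exact h2.symm.trans h1
  set g := R.plus (R.mul e a) with hg
  set h := R.mul e (R.plus a) with hh
  have hgE : g ∈ R.E := R.plus_mem _
  have hhE : h ∈ R.E := R.E_mul_mem e he _ (R.plus_mem a)
  have hgh : R.mul g h = h := (H g hgE).mp (R.E_idem g hgE)
  have hhg : R.mul h g = g := (H h hhE).mpr (R.E_idem h hhE)
  calc g = R.mul h g := hhg.symm
    _ = R.mul g h := R.E_comm h hhE g hgE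
    _ = h := hgh

/-- (ae)⁎ = a⁎·e for e ∈ E. -/
lemma star_mul (R : RSgrp S) {e : S} (he : e ∈ R.E) (a : S) :
    R.star (R.mul a e) = R.mul (R.star a) e := by
  have H : ∀ f ∈ R.E, (R.mul (R.star (R.mul a e)) f = R.star (R.mul a e) ↔
      R.mul (R.mul (R.star a) e) f = R.mul (R.star a) e) := by
    intro f hf
    have h1 := R.ltilde_right_cong a (R.star a) e (R.star_spec a) f hf
    have h2 := R.star_spec (R.mul a e) f hf
    exact h2.symm.trans h1
  set g := R.star (R.mul a e) with hg
  set h := R.mul (R.star a) e with hh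
  have hgE : g ∈ R.E := R.star_mem _
  have hhE : h ∈ R.E := R.E_mul_mem _ (R.star_mem a) e he
  have hhg : R.mul h g = h := (H g hgE).mp (R.E_idem g hgE)
  have hgh : R.mul g h = g := (H h hhE).mpr (R.E_idem h hhE)
  calc g = R.mul g h := hgh.symm
    _ = R.mul h g := R.E_comm g hgE h hhE
    _ = h := hhg

lemma natle_refl (R : RSgrp S) (a : S) : R.NatLe a a :=
  (R.plus_mul_self a).symm

lemma natle_trans (R : RSgrp S) {a b c : S} (hab : R.NatLe a b) (hbc : R.NatLe b c) :
    R.NatLe a c := by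
  unfold RSgrp.NatLe at *
  have hplus : R.plus a = R.mul (R.plus a) (R.plus b) := by
    conv_lhs => rw [hab]
    exact R.plus_mul (R.plus_mem a) b
  calc a = R.mul (R.plus a) b := hab
    _ = R.mul (R.plus a) (R.mul (R.plus b) c) := by rw [← hbc]
    _ = R.mul (R.mul (R.plus a) (R.plus b)) c := (R.assoc _ _ _).symm
    _ = R.mul (R.plus a) c := by rw [← hplus]

/-- a ≤ b iff a = b·a⁎. -/
lemma natle_iff_star (R : RSgrp S) (a b : S) :
    R.NatLe a b ↔ a = R.mul b (R.star a) := by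
  constructor
  · intro h
    have := R.ea_eq b (R.plus a) (R.plus_mem a)
    rw [← h] at this
    exact this
  · intro h
    have := R.ae_eq b (R.star a) (R.star_mem a)
    rw [← h] at this
    exact this

end RSgrp

section StrongLemmas

variable {S : Type u} {T : Type v} {R : RSgrp S} {R' : RSgrp T} {θ : S → T}

/-- If p ∈ E', e ∈ E and p ≤ θe, then p·θ(ex) = p·θx for a strong premorphism. -/
lemma strong_absorb_left (h : IsStrongWPre R R' θ) {p e : _} (hp : p ∈ R'.E)
    (he : e ∈ R.E) (hpe : R'.NatLe p (θ e)) (x : S) :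
    R'.mul p (θ (R.mul e x)) = R'.mul p (θ x) := by
  have h1 : p = R'.mul p (θ e) := by
    have := hpe
    unfold RSgrp.NatLe at this
    rwa [R'.plus_idem hp] at this
  have h2 : p = R'.mul p (R'.plus (θ e)) := by
    conv_lhs => rw [← R'.plus_idem hp, h1]
    exact R'.plus_mul hp (θ e)
  calc R'.mul p (θ (R.mul e x))
      = R'.mul (R'.mul p (R'.plus (θ e))) (θ (R.mul e x)) := by rw [← h2]
    _ = R'.mul p (R'.mul (R'.plus (θ e)) (θ (R.mul e x))) := R'.assoc _ _ _
    _ = R'.mul p (R'.mul (θ e) (θ x)) := by rw [← h.2.1 e x]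
    _ = R'.mul (R'.mul p (θ e)) (θ x) := (R'.assoc _ _ _).symm
    _ = R'.mul p (θ x) := by rw [← h1]

/-- If p ∈ E', f ∈ E and p ≤ θf, then θ(xf)·p = θx·p for a strong premorphism. -/
lemma strong_absorb_right (h : IsStrongWPre R R' θ) {p f : _} (hp : p ∈ R'.E)
    (hf : f ∈ R.E) (hpf : R'.NatLe p (θ f)) (x : S) :
    R'.mul (θ (R.mul x f)) p = R'.mul (θ x) p := by
  have h1 : p = R'.mul (θ f) p := by
    have := (R'.natle_iff_star p (θ f)).mp hpf
    rwa [R'.star_idem hp] at this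
  have h2 : p = R'.mul (R'.star (θ f)) p := by
    conv_lhs => rw [← R'.star_idem hp, h1]
    exact R'.star_mul hp (θ f)
  calc R'.mul (θ (R.mul x f)) p
      = R'.mul (θ (R.mul x f)) (R'.mul (R'.star (θ f)) p) := by rw [← h2]
    _ = R'.mul (R'.mul (θ (R.mul x f)) (R'.star (θ f))) p := (R'.assoc _ _ _).symm
    _ = R'.mul (R'.mul (θ x) (θ f)) p := by rw [← h.2.2 x f]
    _ = R'.mul (θ x) (R'.mul (θ f) p) := R'.assoc _ _ _
    _ = R'.mul (θ x) p := by rw [← h1]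

/-- A strong (∧,r)-premorphism is order-preserving. -/
lemma strong_mono (h : IsStrongWPre R R' θ) {s t : S} (hst : R.NatLe s t) :
    R'.NatLe (θ s) (θ t) := by
  have key := strong_absorb_left h (R'.plus_mem (θ s)) (R.plus_mem s)
    (h.1.2.1 s) t
  unfold RSgrp.NatLe at hst ⊢
  rw [← hst] at key
  rw [← key, R'.plus_mul_self]

end StrongLemmas

/-- The composition of two strong (∧,r)-premorphisms is a
strong (∧,r)-premorphism. -/
theorem stmt_15 {U : Type u} {V : Type v} {W : Type w}
    (RU : RSgrp U) (RV : RSgrp V) (RW : RSgrp W)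
    (θ₁ : U → V) (θ₂ : V → W)
    (h₁ : IsStrongWPre RU RV θ₁) (h₂ : IsStrongWPre RV RW θ₂) :
    IsStrongWPre RU RW (fun x => θ₂ (θ₁ x)) := by
  set ψ : U → W := fun x => θ₂ (θ₁ x) with hψ
  -- (∧1)′ first equality
  have eq1 : ∀ s t, RW.mul (ψ s) (ψ t) =
      RW.mul (RW.plus (ψ s)) (ψ (RU.mul s t)) := by
    intro s t
    have step1 := h₂.2.1 (θ₁ s) (θ₁ t)
    have step2 := h₁.2.1 s t
    have step3 := strong_absorb_left h₂ (RW.plus_mem (θ₂ (θ₁ s)))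
      (RV.plus_mem (θ₁ s)) (h₂.1.2.1 (θ₁ s)) (θ₁ (RU.mul s t))
    calc RW.mul (ψ s) (ψ t)
        = RW.mul (RW.plus (θ₂ (θ₁ s))) (θ₂ (RV.mul (θ₁ s) (θ₁ t))) := step1
      _ = RW.mul (RW.plus (θ₂ (θ₁ s)))
            (θ₂ (RV.mul (RV.plus (θ₁ s)) (θ₁ (RU.mul s t)))) := by rw [← step2]
      _ = RW.mul (RW.plus (ψ s)) (ψ (RU.mul s t)) := step3
  -- (∧1)′ second equality
  have eq2 : ∀ s t, RW.mul (ψ s) (ψ t) =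
      RW.mul (ψ (RU.mul s t)) (RW.star (ψ t)) := by
    intro s t
    have step1 := h₂.2.2 (θ₁ s) (θ₁ t)
    have step2 := h₁.2.2 s t
    have step3 := strong_absorb_right h₂ (RW.star_mem (θ₂ (θ₁ t)))
      (RV.star_mem (θ₁ t)) (h₂.1.2.2 (θ₁ t)) (θ₁ (RU.mul s t))
    calc RW.mul (ψ s) (ψ t)
        = RW.mul (θ₂ (RV.mul (θ₁ s) (θ₁ t))) (RW.star (θ₂ (θ₁ t))) := step1
      _ = RW.mul (θ₂ (RV.mul (θ₁ (RU.mul s t)) (RV.star (θ₁ t))))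
            (RW.star (θ₂ (θ₁ t))) := by rw [← step2]
      _ = RW.mul (ψ (RU.mul s t)) (RW.star (ψ t)) := step3
  -- (∧2)
  have c2 : ∀ s, RW.NatLe (RW.plus (ψ s)) (ψ (RU.plus s)) := fun s =>
    RW.natle_trans (h₂.1.2.1 (θ₁ s)) (strong_mono h₂ (h₁.1.2.1 s))
  have c3 : ∀ s, RW.NatLe (RW.star (ψ s)) (ψ (RU.star s)) := fun s =>
    RW.natle_trans (h₂.1.2.2 (θ₁ s)) (strong_mono h₂ (h₁.1.2.2 s))
  -- (∧1)
  have c1 : ∀ s t, RW.NatLe (RW.mul (ψ s) (ψ t)) (ψ (RU.mul s t)) := by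
    intro s t
    unfold RSgrp.NatLe
    rw [eq1 s t, RW.plus_mul (RW.plus_mem (ψ s)) (ψ (RU.mul s t)),
      RW.assoc, RW.plus_mul_self]
  exact ⟨⟨c1, c2, c3⟩, eq1, eq2⟩
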